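/- Fix α > 0 and t ∈ (0,1]. Define k_t(μ) = [(1+tμ)^{2α} ln(1 + t/μ) + (μ+t)^{2α} ln(1+tμ)] / [(1+tμ)^{2α} + (μ+t)^{2α}] for μ ≥ 1. Then k_t(μ) ≥ ln(1+t) for all μ ≥ 1, i.e., inf_{μ ≥ 1} k_t(μ) = ln(1+t). -/

import Mathlib

/-!
Write `k_t(μ) = (A a + B b) / (A + B)` with weights `A = (1 + tμ)^{2α} ≤ B = (μ + t)^{2α}` and
values `a = ln(1 + t/μ)`, `b = ln(1 + tμ)`. Since `t/μ + tμ ≥ 2t`, we have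
`(1 + t/μ)(1 + tμ) ≥ (1 + t)^2`, i.e. `a + b ≥ 2 ln(1 + t)`, and `b ≥ ln(1 + t)`.
Shifting weight from `a` to the larger value `b` only increases the mean, so
`k_t(μ) ≥ (a + b)/2 ≥ ln(1 + t)`, with equality at `μ = 1`.
-/

/-- The function k_t(μ) of Lemma 2.4. -/
noncomputable def ktFun (α t μ : ℝ) : ℝ :=
  ((1 + t * μ) ^ (2 * α) * Real.log (1 + t / μ) + (μ + t) ^ (2 * α) * Real.log (1 + t * μ)) /
    ((1 + t * μ) ^ (2 * α) + (μ + t) ^ (2 * α))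

open Real Set

lemma le_weighted_mean_of_le_of_two_mul_le_add {A B a b L : ℝ} (hA : 0 < A) (hAB : A ≤ B)
    (hLb : L ≤ b) (hab : 2 * L ≤ a + b) : L ≤ (A * a + B * b) / (A + B) := by
  rw [le_div_iff₀ (by linarith)]
  nlinarith [mul_le_mul_of_nonneg_right hAB (sub_nonneg.2 hLb),
    mul_nonneg hA.le (by linarith : 0 ≤ a + b - 2 * L)]

lemma one_add_mul_le_add_of_le_one {t μ : ℝ} (ht1 : t ≤ 1) (hμ : 1 ≤ μ) :
    1 + t * μ ≤ μ + t := by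
  nlinarith

lemma sq_one_add_le_one_add_div_mul_one_add_mul {t μ : ℝ} (ht : 0 ≤ t) (hμ : 0 < μ) :
    (1 + t) ^ 2 ≤ (1 + t / μ) * (1 + t * μ) := by
  have hexpand : (1 + t / μ) * (1 + t * μ) - (1 + t) ^ 2 = t * (μ - 1) ^ 2 / μ := by
    field_simp
    ring
  have : 0 ≤ t * (μ - 1) ^ 2 / μ := by positivity
  linarith

lemma two_mul_log_one_add_le_log_add_log {t μ : ℝ} (ht : 0 ≤ t) (hμ : 0 < μ) :
    2 * log (1 + t) ≤ log (1 + t / μ) + log (1 + t * μ) := by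
  rw [← log_rpow (by linarith), ← log_mul (by positivity) (by positivity)]
  exact log_le_log (by positivity) (mod_cast sq_one_add_le_one_add_div_mul_one_add_mul ht hμ)

lemma log_one_add_le_ktFun {α t μ : ℝ} (hα : 0 ≤ α) (ht : 0 ≤ t) (ht1 : t ≤ 1) (hμ : 1 ≤ μ) :
    log (1 + t) ≤ ktFun α t μ := by
  have hμ0 : 0 < μ := one_pos.trans_le hμ
  have hpos : 0 < 1 + t * μ := by positivity
  have hweights : (1 + t * μ) ^ (2 * α) ≤ (μ + t) ^ (2 * α) :=
    rpow_le_rpow hpos.le (one_add_mul_le_add_of_le_one ht1 hμ) (by positivity)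
  have hlog : log (1 + t) ≤ log (1 + t * μ) :=
    log_le_log (by linarith) (by nlinarith)
  exact le_weighted_mean_of_le_of_two_mul_le_add (rpow_pos_of_pos hpos _) hweights hlog
    (two_mul_log_one_add_le_log_add_log ht hμ0)

lemma ktFun_one {α t : ℝ} (ht : -1 < t) : ktFun α t 1 = log (1 + t) := by
  have : (1 + t) ^ (2 * α) ≠ 0 := (rpow_pos_of_pos (by linarith) _).ne'
  rw [ktFun, mul_one, div_one, ← two_mul, ← two_mul, mul_div_mul_left _ _ two_ne_zero,
    mul_div_cancel_left₀ _ this]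

theorem ktFun_inf (α t : ℝ) (hα : 0 < α) (ht : 0 < t) (ht1 : t ≤ 1) :
    (∀ μ : ℝ, 1 ≤ μ → Real.log (1 + t) ≤ ktFun α t μ) ∧
      sInf (ktFun α t '' Set.Ici 1) = Real.log (1 + t) := by
  have hlower : ∀ μ : ℝ, 1 ≤ μ → log (1 + t) ≤ ktFun α t μ := fun μ hμ =>
    log_one_add_le_ktFun hα.le ht.le ht1 hμ
  have hleast : IsLeast (ktFun α t '' Ici 1) (log (1 + t)) := by
    refine ⟨⟨1, self_mem_Ici, ktFun_one (by linarith)⟩, ?_⟩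
    rintro _ ⟨μ, hμ, rfl⟩
    exact hlower μ hμ
  exact ⟨hlower, hleast.csInf_eq⟩
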